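/- If an edge-labeled tree (T,λ) explains ε, then every informative triple of ε is displayed by T; that is, for every informative triple xy|z of ε one has lca_T(x,y) ≺_T lca_T(x,y,z). -/
import Mathlib


namespace GenFitch

/-- A rooted tree with leaf set `X`: a finite tree (acyclic connected simple
graph) with a distinguished root and an injective embedding of `X` onto the
set of vertices of degree at most one (the leaves). -/
structure RootedTree (X : Type) where
  V : Type
  fintypeV : Fintype V
  G : SimpleGraph V
  isTree : G.IsTree
  root : V
  leaf : X → V
  leaf_inj : Function.Injective leaf
  leaf_iff : ∀ v : V, (∃ x : X, leaf x = v) ↔ (G.neighborSet v).ncard ≤ 1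

namespace RootedTree

variable {X : Type}

/-- Degree of a vertex. -/
noncomputable def deg (T : RootedTree X) (v : T.V) : ℕ := (T.G.neighborSet v).ncard

/-- `v` is a leaf. -/
def IsLeaf (T : RootedTree X) (v : T.V) : Prop := ∃ x : X, T.leaf x = v

/-- `T` is phylogenetic: the root is an inner vertex of degree at least 2 and
every other inner vertex has degree at least 3. -/
def Phylo (T : RootedTree X) : Prop :=
  ¬ T.IsLeaf T.root ∧ 2 ≤ T.deg T.root ∧
    ∀ v : T.V, ¬ T.IsLeaf v → v ≠ T.root → 3 ≤ T.deg v

/-- `T` is binary: the root has degree exactly 2 and every other inner vertex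
has degree exactly 3. -/
def Binary (T : RootedTree X) : Prop :=
  T.deg T.root = 2 ∧ ∀ v : T.V, ¬ T.IsLeaf v → v ≠ T.root → T.deg v = 3

/-- `u` is an ancestor of `v` (written `u ⪰_T v`): `u` lies on the (unique)
path from the root to `v`. -/
def Anc (T : RootedTree X) (u v : T.V) : Prop :=
  ∀ p : T.G.Walk T.root v, p.IsPath → u ∈ p.support

/-- `l` is the least common ancestor of the set of vertices `S`. -/
def IsLcaSet (T : RootedTree X) (l : T.V) (S : Set T.V) : Prop :=
  (∀ v ∈ S, T.Anc l v) ∧ ∀ u : T.V, (∀ v ∈ S, T.Anc u v) → T.Anc u l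

/-- `T` displays the rooted triple `xy|z`, i.e. `lca(x,y) ≺ lca(x,y,z)`. -/
def Displays (T : RootedTree X) (x y z : X) : Prop :=
  ∃ l₂ l₃ : T.V, T.IsLcaSet l₂ {T.leaf x, T.leaf y} ∧
    T.IsLcaSet l₃ {T.leaf x, T.leaf y, T.leaf z} ∧ T.Anc l₃ l₂ ∧ l₂ ≠ l₃

end RootedTree

/-- Some edge on the (unique) path from `lca(x,y)` to `y` carries the label
`m`.  Labels are drawn from `Option L`, with `none` playing the role of `⊗`. -/
def PathHasLabel {X L : Type} (T : RootedTree X) (lam : Sym2 T.V → Option L)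
    (x y : X) (m : L) : Prop :=
  ∃ l : T.V, T.IsLcaSet l {T.leaf x, T.leaf y} ∧
    ∃ p : T.G.Walk l (T.leaf y), p.IsPath ∧ ∃ e ∈ p.edges, lam e = some m

/-- The edge-labeled tree `(T,lam)` explains the map `eps`:
for all distinct `x y`, `eps x y = some m` iff some edge on the path from
`lca(x,y)` to `y` has label `m`, and `eps x y = none` (i.e. `⊗`) iff no edge
on that path carries a label in `L`. -/
def Explains {X L : Type} (T : RootedTree X) (lam : Sym2 T.V → Option L)
    (eps : X → X → Option L) : Prop :=
  ∀ x y : X, x ≠ y →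
    ((∀ m : L, eps x y = some m ↔ PathHasLabel T lam x y m) ∧
     (eps x y = none ↔ ∀ m : L, ¬ PathHasLabel T lam x y m))

/-- `eps` is tree-like: some edge-labeled phylogenetic tree explains it. -/
def TreeLike {X L : Type} (eps : X → X → Option L) : Prop :=
  ∃ (T : RootedTree X) (lam : Sym2 T.V → Option L), T.Phylo ∧ Explains T lam eps

/-- The set `X_s` for a symbol `s ∈ M ∪ {⊗}` (encoded as `s : Option M`):
those `x` having an in-arc labeled `s` and all other in-arcs labeled `⊗` or `s`. -/
def Xset {X M : Type} (eps : X → X → Option M) (s : Option M) : Set X :=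
  {x : X | ∃ z : X, z ≠ x ∧ eps z x = s ∧
    ∀ z' : X, z' ≠ z → z' ≠ x → (eps z' x = none ∨ eps z' x = s)}

/-- The sets `X_s`, `s ∈ M ∪ {⊗}`, form a quasi-partition of `X`: pairwise
disjoint, union `X`, and at most one of them empty. -/
def QuasiPartition {X M : Type} (eps : X → X → Option M) : Prop :=
  (∀ s t : Option M, s ≠ t → Disjoint (Xset eps s) (Xset eps t)) ∧
  (⋃ s : Option M, Xset eps s) = Set.univ ∧
  {s : Option M | Xset eps s = ∅}.Subsingleton

/-- A digraph `(Y, A)` is a simple Fitch graph: it is explained by a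
`{1,⊗}`-edge-labeled phylogenetic tree on `Y` (a digraph on at most one
vertex is trivially explained by the trivial tree). -/
def IsFitchGraph (Y : Type) (A : Y → Y → Prop) : Prop :=
  Subsingleton Y ∨
  ∃ (T : RootedTree Y) (lam : Sym2 T.V → Option Unit), T.Phylo ∧
    ∀ x y : Y, x ≠ y → (A x y ↔ PathHasLabel T lam x y Unit.unit)

/-- `T'` is obtained from `T` by contracting (the fibers of) `φ`; equivalently,
`T` refines `T'`. -/
structure IsContractionMap {X : Type} (T T' : RootedTree X) (φ : T.V → T'.V) :
    Prop where
  surj : Function.Surjective φ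
  root_map : φ T.root = T'.root
  leaf_map : ∀ x : X, φ (T.leaf x) = T'.leaf x
  adj_map : ∀ a b : T.V, T.G.Adj a b → φ a = φ b ∨ T'.G.Adj (φ a) (φ b)
  adj_lift : ∀ u v : T'.V, T'.G.Adj u v →
    ∃ a b : T.V, T.G.Adj a b ∧ φ a = u ∧ φ b = v
  fiber_conn : ∀ u : T'.V, (T.G.induce {a : T.V | φ a = u}).Connected

/-- `(T,lam)` is a least-resolved tree explaining `eps`: it explains `eps` and
no tree obtained from `T` by contracting one or more edges admits an
edge-labeling explaining `eps`. -/
def LeastResolved {X M : Type} (eps : X → X → Option M) (T : RootedTree X)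
    (lam : Sym2 T.V → Option M) : Prop :=
  T.Phylo ∧ Explains T lam eps ∧
    ∀ (T' : RootedTree X) (φ : T.V → T'.V) (lam' : Sym2 T'.V → Option M),
      IsContractionMap T T' φ → ¬ Function.Injective φ → T'.Phylo →
        ¬ Explains T' lam' eps

/-- The rooted triple `xy|z` is informative for `eps`. -/
def Informative {X M : Type} (eps : X → X → Option M) (x y z : X) : Prop :=
  x ≠ y ∧ x ≠ z ∧ y ≠ z ∧
  ∃ m : M, eps z x = some m ∧ eps z y = some m ∧ eps x z = eps y z ∧
    (eps x y = none ∨ eps x y = some m) ∧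
    (eps y x = none ∨ eps y x = some m) ∧
    (eps x y = none ∨ eps y x = none)

/-- `T'` (a rooted tree on `Y`, with `incl : Y → X` and vertex embedding `ι`)
is the restriction `T|Y` of `T` to the leaf set `Y`: leaves map to leaves,
the ancestor relation is preserved and reflected, the vertices of `T'`
correspond exactly to the least common ancestors of pairs of `Y`-leaves in
`T`, and the root of `T'` corresponds to the least common ancestor of all
`Y`-leaves. -/
structure IsRestriction {X Y : Type} (T : RootedTree X) (incl : Y → X)
    (T' : RootedTree Y) (ι : T'.V → T.V) : Prop where
  inj : Function.Injective ι
  leaf_map : ∀ y : Y, ι (T'.leaf y) = T.leaf (incl y)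
  anc_iff : ∀ a b : T'.V, T'.Anc a b ↔ T.Anc (ι a) (ι b)
  image : ∀ v : T.V, (∃ a : T'.V, ι a = v) ↔
      ∃ y z : Y, T.IsLcaSet v {T.leaf (incl y), T.leaf (incl z)}
  root_map : T.IsLcaSet (ι T'.root) {v : T.V | ∃ y : Y, v = T.leaf (incl y)}

namespace RootedTree

open SimpleGraph

variable {X : Type}

noncomputable local instance instDecEqV (T : RootedTree X) : DecidableEq T.V :=
  Classical.decEq _

variable {X : Type} {T : RootedTree X}

noncomputable def cpath (T : RootedTree X) (v : T.V) : T.G.Walk T.root v :=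
  (T.isTree.existsUnique_path T.root v).choose

lemma cpath_isPath (T : RootedTree X) (v : T.V) : (T.cpath v).IsPath :=
  (T.isTree.existsUnique_path T.root v).choose_spec.1

lemma path_unique {u v : T.V} {p q : T.G.Walk u v} (hp : p.IsPath) (hq : q.IsPath) :
    p = q :=
  ((T.isTree.existsUnique_path u v).unique hp hq)

lemma anc_iff {u v : T.V} : T.Anc u v ↔ u ∈ (T.cpath v).support := by
  constructor
  · intro h; exact h _ (T.cpath_isPath v)
  · intro h p hp; rwa [path_unique hp (T.cpath_isPath v)]

lemma takeUntil_cpath {u v : T.V} (h : u ∈ (T.cpath v).support) :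
    (T.cpath v).takeUntil u h = T.cpath u :=
  path_unique ((T.cpath_isPath v).takeUntil h) (T.cpath_isPath u)

lemma anc_refl (v : T.V) : T.Anc v v := anc_iff.2 (Walk.end_mem_support _)

lemma anc_root (v : T.V) : T.Anc T.root v := anc_iff.2 (Walk.start_mem_support _)

lemma length_decomp {u v : T.V} (h : T.Anc u v) :
    (T.cpath v).length = (T.cpath u).length
      + ((T.cpath v).dropUntil u (anc_iff.1 h)).length := by
  have hm := anc_iff.1 h
  have hs := congrArg Walk.length ((T.cpath v).take_spec hm)
  rw [Walk.length_append, takeUntil_cpath hm] at hs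
  omega

lemma length_le_of_anc {u v : T.V} (h : T.Anc u v) :
    (T.cpath u).length ≤ (T.cpath v).length := by
  have := length_decomp h; omega

lemma eq_of_anc_of_length_le {u v : T.V} (h : T.Anc u v)
    (hl : (T.cpath v).length ≤ (T.cpath u).length) : u = v := by
  have hd := length_decomp h
  exact Walk.eq_of_length_eq_zero (p := (T.cpath v).dropUntil u (anc_iff.1 h)) (by omega)

lemma anc_antisymm {u v : T.V} (h : T.Anc u v) (h' : T.Anc v u) : u = v :=
  eq_of_anc_of_length_le h (length_le_of_anc h')

lemma anc_trans {u v w : T.V} (h : T.Anc u v) (h' : T.Anc v w) : T.Anc u w := by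
  rw [anc_iff] at h h' ⊢
  have hs := (T.cpath w).take_spec h'
  rw [← hs, Walk.mem_support_append_iff]
  left; rwa [takeUntil_cpath h']

lemma anc_total {u u' v : T.V} (h : T.Anc u v) (h' : T.Anc u' v) :
    T.Anc u u' ∨ T.Anc u' u := by
  rw [anc_iff] at h h'
  by_cases hc : u ∈ ((T.cpath v).takeUntil u' h').support
  · left; exact anc_iff.2 (takeUntil_cpath h' ▸ hc)
  · right
    set d := (T.cpath v).dropUntil u' h' with hd_def
    have hd : d.IsPath := (T.cpath_isPath v).dropUntil h'
    have humem : u ∈ d.support := by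
      have hs := (T.cpath v).take_spec h'
      rw [← hs, Walk.mem_support_append_iff] at h
      tauto
    set r := d.takeUntil u humem with hr_def
    have hr : r.IsPath := hd.takeUntil humem
    have key : ((T.cpath u').append r).IsPath := by
      rw [Walk.isPath_def, Walk.support_append]
      refine List.Nodup.append (T.cpath_isPath u').support_nodup
        (hr.support_nodup.tail) ?_
      intro a ha ha'
      have ha2 : a ∈ d.support.tail := by
        have h1 : a ∈ r.support := List.mem_of_mem_tail ha'
        have h2 : a ∈ d.support := Walk.support_takeUntil_subset d humem h1
        have hne : a ≠ u' := by
          intro hau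
          have := hr.support_nodup
          rw [r.support_eq_cons] at this
          exact (List.nodup_cons.1 this).1 (hau ▸ ha')
        rw [d.support_eq_cons, List.mem_cons] at h2
        rcases h2 with h2 | h2
        · exact absurd h2 hne
        · exact h2
      have hnodup := (T.cpath_isPath v).support_nodup
      rw [← (T.cpath v).take_spec h', Walk.support_append] at hnodup
      have hdisj := List.disjoint_of_nodup_append hnodup
      rw [takeUntil_cpath h'] at hdisj
      exact hdisj ha ha2
    have : T.cpath u = (T.cpath u').append r :=
      path_unique (T.cpath_isPath u) key
    rw [anc_iff, this, Walk.mem_support_append_iff]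
    left; exact Walk.end_mem_support _

lemma exists_lca' (T : RootedTree X) (S : Set T.V) (hS : S.Nonempty) :
    ∃ l : T.V, (∀ v ∈ S, T.Anc l v) ∧ ∀ u : T.V, (∀ v ∈ S, T.Anc u v) → T.Anc u l := by
  letI := T.fintypeV
  obtain ⟨x₀, hx₀⟩ := hS
  set A : Set T.V := {u | ∀ v ∈ S, T.Anc u v} with hA
  have hroot : T.root ∈ A := fun v _ => anc_root v
  obtain ⟨l, hlA, hmax⟩ :=
    Set.exists_max_image A (fun u => (T.cpath u).length) (Set.toFinite A) ⟨_, hroot⟩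
  refine ⟨l, hlA, fun u hu => ?_⟩
  rcases anc_total (hu x₀ hx₀) (hlA x₀ hx₀) with h | h
  · exact h
  · have : l = u := eq_of_anc_of_length_le h (hmax u hu)
    rw [← this]; exact anc_refl l

lemma edge_transfer {l w v : T.V} (hlw : T.Anc l w) (hwv : T.Anc w v)
    {q : T.G.Walk w v} (hq : q.IsPath) {e : Sym2 T.V} (he : e ∈ q.edges) :
    ∃ p : T.G.Walk l v, p.IsPath ∧ e ∈ p.edges := by
  have hlv : T.Anc l v := anc_trans hlw hwv
  have hl : l ∈ (T.cpath v).support := anc_iff.1 hlv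
  set p := (T.cpath v).dropUntil l hl with hp_def
  have hp : p.IsPath := (T.cpath_isPath v).dropUntil hl
  have hw : w ∈ p.support := by
    have hwv' : w ∈ (T.cpath v).support := anc_iff.1 hwv
    rw [← (T.cpath v).take_spec hl, Walk.mem_support_append_iff] at hwv'
    rcases hwv' with h | h
    · have h1 : T.Anc w l := anc_iff.2 (takeUntil_cpath hl ▸ h)
      have h2 : w = l := anc_antisymm h1 hlw
      rw [h2]; exact Walk.start_mem_support _
    · exact h
  refine ⟨p, hp, ?_⟩
  have hqe : q = p.dropUntil w hw := path_unique hq (hp.dropUntil hw)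
  exact Walk.edges_dropUntil_subset p hw (hqe ▸ he)


end RootedTree

theorem stmt12 {X M : Type} [Fintype X] [Fintype M] [Nonempty M]
    (hX : 1 < Fintype.card X)
    (eps : X → X → Option M)
    (T : RootedTree X) (lam : Sym2 T.V → Option M)
    (hphylo : T.Phylo) (hexp : Explains T lam eps) :
    ∀ x y z : X, Informative eps x y z → T.Displays x y z := by
  intro x y z hinf
  obtain ⟨hxy, hxz, hyz, m, hzx, hzy, -, hxyo, hyxo, hnone⟩ := hinf
  obtain ⟨l₂, hl₂⟩ := RootedTree.exists_lca' T {T.leaf x, T.leaf y} ⟨_, Or.inl rfl⟩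
  obtain ⟨l₃, hl₃⟩ := RootedTree.exists_lca' T {T.leaf x, T.leaf y, T.leaf z} ⟨_, Or.inl rfl⟩
  have hlx : T.Anc l₂ (T.leaf x) := hl₂.1 _ (Or.inl rfl)
  have hly : T.Anc l₂ (T.leaf y) := hl₂.1 _ (Or.inr rfl)
  have h32 : T.Anc l₃ l₂ := by
    refine hl₂.2 l₃ ?_
    intro v hv
    rcases hv with rfl | rfl
    · exact hl₃.1 _ (Or.inl rfl)
    · exact hl₃.1 _ (Or.inr (Or.inl rfl))
  refine ⟨l₂, l₃, hl₂, hl₃, h32, ?_⟩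
  intro heq
  have hlz : T.Anc l₂ (T.leaf z) := by
    rw [heq]; exact hl₃.1 _ (Or.inr (Or.inr rfl))
  have hPzx : PathHasLabel T lam z x m := ((hexp z x (Ne.symm hxz)).1 m).1 hzx
  have hPzy : PathHasLabel T lam z y m := ((hexp z y (Ne.symm hyz)).1 m).1 hzy
  obtain ⟨w, hw, p, hp, e, he, hle⟩ := hPzx
  obtain ⟨w', hw', q, hq, e', he', hle'⟩ := hPzy
  have hwx : T.Anc w (T.leaf x) := hw.1 _ (Or.inr rfl)
  have hwz : T.Anc w (T.leaf z) := hw.1 _ (Or.inl rfl)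
  have hw'y : T.Anc w' (T.leaf y) := hw'.1 _ (Or.inr rfl)
  have hw'z : T.Anc w' (T.leaf z) := hw'.1 _ (Or.inl rfl)
  have hlw : T.Anc l₂ w := by
    refine hw.2 l₂ ?_
    intro v hv
    rcases hv with rfl | rfl
    · exact hlz
    · exact hlx
  have hlw' : T.Anc l₂ w' := by
    refine hw'.2 l₂ ?_
    intro v hv
    rcases hv with rfl | rfl
    · exact hlz
    · exact hly
  have hkey : w = l₂ ∨ w' = l₂ := by
    rcases RootedTree.anc_total hwz hw'z with h | h
    · left
      refine RootedTree.anc_antisymm ?_ hlw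
      refine hl₂.2 w ?_
      intro v hv
      rcases hv with rfl | rfl
      · exact hwx
      · exact RootedTree.anc_trans h hw'y
    · right
      refine RootedTree.anc_antisymm ?_ hlw'
      refine hl₂.2 w' ?_
      intro v hv
      rcases hv with rfl | rfl
      · exact RootedTree.anc_trans h hwx
      · exact hw'y
  have hl₂' : T.IsLcaSet l₂ {T.leaf y, T.leaf x} := by
    rw [Set.pair_comm]; exact hl₂
  rcases hkey with rfl | rfl
  · -- w = l₂ : the path from lca(x,y) to x carries the label m
    have hyx : eps y x = some m :=
      ((hexp y x (Ne.symm hxy)).1 m).2 ⟨w, hl₂', p, hp, e, he, hle⟩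
    have hxy0 : eps x y = none := by
      rcases hnone with h | h
      · exact h
      · rw [h] at hyx; exact absurd hyx (by simp)
    obtain ⟨p', hp', hep'⟩ := RootedTree.edge_transfer hlw' hw'y hq he'
    exact ((hexp x y hxy).2.1 hxy0) m ⟨w, hl₂, p', hp', e', hep', hle'⟩
  · -- w' = l₂ : the path from lca(x,y) to y carries the label m
    have hxym : eps x y = some m :=
      ((hexp x y hxy).1 m).2 ⟨w', hl₂, q, hq, e', he', hle'⟩
    have hyx0 : eps y x = none := by
      rcases hnone with h | h
      · rw [h] at hxym; exact absurd hxym (by simp)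
      · exact h
    obtain ⟨p', hp', hep'⟩ := RootedTree.edge_transfer hlw hwx hp he
    exact ((hexp y x (Ne.symm hxy)).2.1 hyx0) m ⟨w', hl₂', p', hp', e, hep', hle⟩

end GenFitch
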